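/- Let n ≥ 1, S = ℚ[x_1,…,x_n], and let M_n ⊆ S^{n+1} be the spline module of the fan P_2(A_n). For every k ≥ 0, the ℚ-vector space of elements of M_n that are homogeneous of degree k has dimension ∑_{i=0}^{min(k,n)} C(k − i + n − 1, n − 1) (binomial coefficients); equivalently, the Hilbert series of M_n is (∑_{i=0}^{n} t^i)/(1 − t)^n, which equals the Hilbert series (1 − t^{n+1})/(1 − t)^{n+1} of the Stanley–Reisner ring ℚ[y_0,…,y_n]/⟨y_0⋯y_n⟩. -/

import Mathlib

/-!
Put `x_0 := 0`. Then `M_n` consists of the tuples with `x_i - x_j ∣ f_i - f_j` for all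
`i < j ≤ n`, and the Newton-type splines `g_m(j) = ∏_{l < m} (x_l - x_j)`, `0 ≤ m ≤ n`, form a
basis. Indeed `g_m` is homogeneous of degree `m`, vanishes at `0, …, m - 1` and not at `m`;
conversely, if a spline `f` vanishes at `0, …, m - 1`, then `f_m` is divisible by each of the
pairwise non-associate linear forms `x_l - x_m`, `l < m`, hence by `g_m(m)`, and subtracting the
appropriate multiple of `g_m` makes `f` vanish at `m` too. So the degree-`k` part of `M_n` is
`⨁_{m ≤ min(k, n)} S_{k-m} g_m`, and `dim S_d = C(d + n - 1, n - 1)`.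
-/

open MvPolynomial

/-- The ring `S = ℚ[x_1,…,x_n]`. -/
abbrev S (n : ℕ) : Type := MvPolynomial (Fin n) ℚ

/-- The Billera–Rose spline module `M_n = C^0(P_2(A_n)) ⊆ S^{n+1}`: tuples
`(f_0, f_1, …, f_n)` with `x_i ∣ f_0 - f_i` for `1 ≤ i ≤ n` and
`x_i - x_j ∣ f_i - f_j` for `1 ≤ i < j ≤ n`. -/
noncomputable def splineModule (n : ℕ) : Submodule (S n) (Fin (n + 1) → S n) where
  carrier := {f | (∀ i : Fin n, X i ∣ f 0 - f i.succ) ∧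
    ∀ i j : Fin n, i < j → (X i - X j) ∣ f i.succ - f j.succ}
  add_mem' := by
    rintro a b ⟨ha1, ha2⟩ ⟨hb1, hb2⟩
    refine ⟨fun i => ?_, fun i j hij => ?_⟩
    · simpa [sub_add_sub_comm] using dvd_add (ha1 i) (hb1 i)
    · simpa [sub_add_sub_comm] using dvd_add (ha2 i j hij) (hb2 i j hij)
  zero_mem' := by
    refine ⟨fun i => ?_, fun i j _ => ?_⟩ <;> simp
  smul_mem' := by
    rintro c f ⟨h1, h2⟩
    refine ⟨fun i => ?_, fun i j hij => ?_⟩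
    · simpa [smul_eq_mul, mul_sub] using (h1 i).mul_left c
    · simpa [smul_eq_mul, mul_sub] using (h2 i j hij).mul_left c


/-- The `ℚ`-vector space of elements of the spline module `M_n = C^0(P_2(A_n))` all of
whose `n+1` components are homogeneous polynomials of degree `k` (or zero). -/
noncomputable def splineHomPart (n k : ℕ) : Submodule ℚ (Fin (n + 1) → S n) :=
  (Submodule.restrictScalars ℚ (splineModule n)) ⊓
    Submodule.pi Set.univ (fun _ : Fin (n + 1) => homogeneousSubmodule (Fin n) ℚ k)

namespace MvPolynomial

section Divisibility

variable {σ R : Type*} [CommRing R]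

theorem dvd_sub_aeval {d : MvPolynomial σ R} (g : σ → MvPolynomial σ R)
    (h : ∀ i, d ∣ X i - g i) (f : MvPolynomial σ R) : d ∣ f - aeval g f := by
  induction f using MvPolynomial.induction_on with
  | C a => simp
  | add p q hp hq => simpa only [map_add, add_sub_add_comm] using dvd_add hp hq
  | mul_X p i hp =>
    have : p * X i - aeval g (p * X i) = (p - aeval g p) * X i + aeval g p * (X i - g i) := by
      rw [map_mul, aeval_X]; ring
    rw [this]
    exact dvd_add (hp.mul_right _) ((h i).mul_left _)

variable [DecidableEq σ]

theorem aeval_update_of_notMem_vars {j : σ} {p : MvPolynomial σ R} (hp : j ∉ p.vars)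
    (w : MvPolynomial σ R) : aeval (Function.update X j w) p = p := by
  conv_rhs => rw [← aeval_X_left_apply p]
  apply eval₂_congr
  intro i c hic hc
  refine Function.update_of_ne ?_ _ _
  rintro rfl
  exact hp ((mem_vars_iff_mem_support i).mpr ⟨c, mem_support_iff.mpr hc, hic⟩)

theorem sub_X_dvd_iff {j : σ} {v : MvPolynomial σ R} (hv : j ∉ v.vars)
    (f : MvPolynomial σ R) : v - X j ∣ f ↔ aeval (Function.update X j v) f = 0 := by
  constructor
  · rintro ⟨q, rfl⟩
    rw [map_mul, map_sub, aeval_X, Function.update_self, aeval_update_of_notMem_vars hv,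
      sub_self, zero_mul]
  · intro hf
    have key := dvd_sub_aeval (Function.update X j v) (d := v - X j) (fun i => ?_) f
    · rwa [hf, sub_zero] at key
    · rcases eq_or_ne i j with rfl | hij
      · rw [Function.update_self, ← neg_sub, neg_dvd]
      · rw [Function.update_of_ne hij, sub_self]
        exact dvd_zero _

theorem prod_sub_X_dvd [IsDomain R] {ι : Type*} {s : Finset ι} {v : ι → MvPolynomial σ R}
    {j : σ} (hv : ∀ l ∈ s, j ∉ (v l).vars) (hinj : Set.InjOn v s) {g : MvPolynomial σ R}
    (h : ∀ l ∈ s, v l - X j ∣ g) : ∏ l ∈ s, (v l - X j) ∣ g := by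
  classical
  induction s using Finset.induction_on generalizing g with
  | empty => simp
  | insert a s ha ih =>
    obtain ⟨q, rfl⟩ := h a (Finset.mem_insert_self a s)
    rw [Finset.prod_insert ha]
    refine mul_dvd_mul_left _ (ih (fun l hl => hv l (Finset.mem_insert_of_mem hl))
      (hinj.mono (Finset.subset_insert a s)) fun l hl => ?_)
    have hla : v l ≠ v a := fun hva => ha (hinj (Finset.mem_insert_of_mem hl)
      (Finset.mem_insert_self a s) hva ▸ hl)
    have hdvd := h l (Finset.mem_insert_of_mem hl)
    rw [sub_X_dvd_iff (hv l (Finset.mem_insert_of_mem hl))] at hdvd ⊢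
    -- substituting `X j ↦ v l` turns the factor `v a - X j` into `v a - v l ≠ 0`
    rw [map_mul, map_sub, aeval_update_of_notMem_vars (hv a (Finset.mem_insert_self a s)),
      aeval_X, Function.update_self] at hdvd
    exact (mul_eq_zero.mp hdvd).resolve_left (sub_ne_zero.mpr hla.symm)

end Divisibility

section Homogeneous

variable {σ R : Type*} [CommSemiring R]

theorem homogeneousComponent_mul_of_isHomogeneous_left {p : MvPolynomial σ R} {m : ℕ}
    (hp : p.IsHomogeneous m) (q : MvPolynomial σ R) (k : ℕ) :
    homogeneousComponent k (p * q) = if m ≤ k then p * homogeneousComponent (k - m) q else 0 := by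
  let := MvPolynomial.gradedAlgebra (σ := σ) (R := R)
  simp only [← decomposition.decompose'_apply]
  exact DirectSum.coe_decompose_mul_of_left_mem (homogeneousSubmodule σ R) k hp

theorem IsHomogeneous.exists_eq_mul_of_dvd {p f : MvPolynomial σ R} {m k : ℕ}
    (hp : p.IsHomogeneous m) (hf : f.IsHomogeneous k) (hpf : p ∣ f) (hmk : m ≤ k) :
    ∃ q : MvPolynomial σ R, q.IsHomogeneous (k - m) ∧ f = p * q := by
  obtain ⟨q, rfl⟩ := hpf
  refine ⟨homogeneousComponent (k - m) q, homogeneousComponent_isHomogeneous _ _, ?_⟩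
  rw [← homogeneousComponent_eq_self hf, homogeneousComponent_mul_of_isHomogeneous_left hp,
    if_pos hmk]

theorem IsHomogeneous.eq_zero_of_dvd_of_lt {p f : MvPolynomial σ R} {m k : ℕ}
    (hp : p.IsHomogeneous m) (hf : f.IsHomogeneous k) (hpf : p ∣ f) (hkm : k < m) : f = 0 := by
  obtain ⟨q, rfl⟩ := hpf
  rw [← homogeneousComponent_eq_self hf, homogeneousComponent_mul_of_isHomogeneous_left hp,
    if_neg (not_le.mpr hkm)]

end Homogeneous

section Dimension

variable (σ R : Type*) [CommSemiring R]

theorem setOf_degree_eq [Fintype σ] [DecidableEq σ] (k : ℕ) :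
    {d : σ →₀ ℕ | d.degree = k} = (Finset.univ.finsuppAntidiag k : Finset (σ →₀ ℕ)) := by
  ext d
  simp [Finset.mem_finsuppAntidiag, Finsupp.degree_eq_sum]

noncomputable def homogeneousSubmoduleBasis (k : ℕ) :
    Module.Basis {d : σ →₀ ℕ | d.degree = k} R (homogeneousSubmodule σ R k) :=
  (basisRestrictSupport R _).map
    (LinearEquiv.ofEq _ _ (homogeneousSubmodule_eq_finsupp_supported (σ := σ) (R := R) k).symm)

instance [Fintype σ] (k : ℕ) : Module.Finite R (homogeneousSubmodule σ R k) := by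
  classical
  have : Finite {d : σ →₀ ℕ | d.degree = k} := by rw [setOf_degree_eq]; infer_instance
  exact Module.Finite.of_basis (homogeneousSubmoduleBasis σ R k)

theorem finrank_homogeneousSubmodule [Fintype σ] [StrongRankCondition R] (k : ℕ) :
    Module.finrank R (homogeneousSubmodule σ R k) = (Fintype.card σ + k - 1).choose k := by
  classical
  rw [Module.finrank_eq_nat_card_basis (homogeneousSubmoduleBasis σ R k), Nat.card_coe_set_eq,
    setOf_degree_eq, Set.ncard_coe_finset, Finset.card_finsuppAntidiag_nat_eq_choose,
    Finset.card_univ]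

end Dimension

end MvPolynomial

section Splines

variable {n : ℕ}

/-- With `x_0 := 0`, both families of conditions defining `splineModule n` read
`x_i - x_j ∣ f_i - f_j` for `i < j` in `Fin (n + 1)`. -/
noncomputable def linearForm (n : ℕ) : Fin (n + 1) → S n := Fin.cons 0 X

theorem linearForm_injective : Function.Injective (linearForm n) :=
  Fin.cons_injective_iff.mpr ⟨fun ⟨i, hi⟩ => X_ne_zero i hi, X_injective⟩

theorem linearForm_isHomogeneous (j : Fin (n + 1)) : (linearForm n j).IsHomogeneous 1 :=
  Fin.cases (isHomogeneous_zero _ _ _) (isHomogeneous_X ℚ) j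

theorem mem_splineModule_iff {f : Fin (n + 1) → S n} :
    f ∈ splineModule n ↔
      ∀ i j : Fin (n + 1), i < j → linearForm n i - linearForm n j ∣ f i - f j := by
  refine ⟨fun ⟨h0, hs⟩ i j hij => ?_, fun h => ⟨fun i => ?_, fun i j hij => ?_⟩⟩
  · induction i using Fin.cases with
    | zero =>
      induction j using Fin.cases with
      | zero => exact absurd hij (lt_irrefl 0)
      | succ j => simpa [linearForm] using h0 j
    | succ i =>
      induction j using Fin.cases with
      | zero => exact absurd hij (Fin.succ_pos i).not_gt
      | succ j => simpa [linearForm] using hs i j (Fin.succ_lt_succ_iff.mp hij)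
  · simpa [linearForm] using h 0 i.succ (Fin.succ_pos i)
  · simpa [linearForm] using h i.succ j.succ (Fin.succ_lt_succ_iff.mpr hij)

noncomputable def splineGen (n m : ℕ) (j : Fin (n + 1)) : S n :=
  ∏ l : Fin (n + 1) with l.val < m, (linearForm n l - linearForm n j)

theorem splineGen_mem (m : ℕ) : splineGen n m ∈ splineModule n := by
  rw [mem_splineModule_iff]
  intro i j _
  let P : Polynomial (S n) :=
    ∏ l : Fin (n + 1) with l.val < m, (Polynomial.C (linearForm n l) - Polynomial.X)
  have hP (j : Fin (n + 1)) : splineGen n m j = P.eval (linearForm n j) := by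
    simp [P, splineGen, Polynomial.eval_prod]
  rw [hP, hP]
  exact Polynomial.sub_dvd_eval_sub _ _ P

theorem splineGen_apply_of_lt {m : ℕ} {j : Fin (n + 1)} (hj : (j : ℕ) < m) :
    splineGen n m j = 0 :=
  Finset.prod_eq_zero (Finset.mem_filter.mpr ⟨Finset.mem_univ j, hj⟩) (sub_self _)

theorem splineGen_apply_self_ne_zero {m : ℕ} (hm : m < n + 1) : splineGen n m ⟨m, hm⟩ ≠ 0 :=
  Finset.prod_ne_zero_iff.mpr fun _ hl => sub_ne_zero.mpr fun h =>
    (Finset.mem_filter.mp hl).2.ne (Fin.val_eq_of_eq (linearForm_injective h))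

theorem splineGen_isHomogeneous {m : ℕ} (hm : m ≤ n + 1) (j : Fin (n + 1)) :
    (splineGen n m j).IsHomogeneous m := by
  have h := IsHomogeneous.prod {l : Fin (n + 1) | l.val < m}
    (fun l => linearForm n l - linearForm n j) (fun _ => 1)
    fun l _ => (linearForm_isHomogeneous l).sub (linearForm_isHomogeneous j)
  rwa [Finset.sum_const, smul_eq_mul, mul_one, Fin.card_filter_val_lt, min_eq_right hm] at h

/-- Each `x_l - x_m` with `l < m` divides `f_m`, and these factors are pairwise non-associate
primes. -/
theorem splineGen_apply_self_dvd {m : ℕ} (hm : m < n + 1) {f : Fin (n + 1) → S n}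
    (hf : f ∈ splineModule n) (hz : ∀ j : Fin (n + 1), (j : ℕ) < m → f j = 0) :
    splineGen n m ⟨m, hm⟩ ∣ f ⟨m, hm⟩ := by
  cases m with
  | zero => simp [splineGen]
  | succ i =>
    have hi : i < n := by omega
    have hx : linearForm n ⟨i + 1, hm⟩ = X ⟨i, hi⟩ := rfl
    rw [splineGen, hx]
    refine prod_sub_X_dvd (v := linearForm n) (j := (⟨i, hi⟩ : Fin n)) (fun l hl => ?_)
      linearForm_injective.injOn fun l hl => ?_
    · have hl : (l : ℕ) < i + 1 := (Finset.mem_filter.mp hl).2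
      induction l using Fin.cases with
      | zero => simp [linearForm]
      | succ l =>
        simp only [linearForm, Fin.cons_succ, vars_X, Finset.mem_singleton]
        exact fun h => by simp [← h] at hl
    · have hl : (l : ℕ) < i + 1 := (Finset.mem_filter.mp hl).2
      simpa [hz l hl, hx] using mem_splineModule_iff.mp hf l ⟨i + 1, hm⟩ hl

theorem mem_splineHomPart_iff {k : ℕ} {f : Fin (n + 1) → S n} :
    f ∈ splineHomPart n k ↔ f ∈ splineModule n ∧ ∀ j, (f j).IsHomogeneous k := by
  simp [splineHomPart, Submodule.mem_pi, mem_homogeneousSubmodule]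

theorem smul_splineGen_mem_splineHomPart {k m : ℕ} (hmn : m ≤ n + 1) (hmk : m ≤ k) {c : S n}
    (hc : c.IsHomogeneous (k - m)) : c • splineGen n m ∈ splineHomPart n k := by
  refine mem_splineHomPart_iff.mpr ⟨(splineModule n).smul_mem c (splineGen_mem m), fun j => ?_⟩
  simpa [Nat.sub_add_cancel hmk] using hc.mul (splineGen_isHomogeneous hmn j)

end Splines

section Basis

variable {n k : ℕ}

theorem val_le_of_fin_min_succ (m : Fin (min k n + 1)) : (m : ℕ) ≤ k ∧ (m : ℕ) ≤ n :=
  le_min_iff.mp (Nat.lt_succ_iff.mp m.2)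

noncomputable def sumSplineGen (n k : ℕ) :
    (∀ m : Fin (min k n + 1), homogeneousSubmodule (Fin n) ℚ (k - m)) →ₗ[ℚ]
      (Fin (n + 1) → S n) :=
  LinearMap.lsum ℚ _ ℚ fun m => (homogeneousSubmodule (Fin n) ℚ (k - m)).subtype.smulRight
    (splineGen n m)

theorem sumSplineGen_apply
    (c : ∀ m : Fin (min k n + 1), homogeneousSubmodule (Fin n) ℚ (k - m)) :
    sumSplineGen n k c = ∑ m, (c m : S n) • splineGen n m := by
  simp [sumSplineGen, LinearMap.lsum_apply]

theorem smul_splineGen_mem_range {m : ℕ} (hmk : m ≤ k) (hmn : m ≤ n) {c : S n}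
    (hc : c.IsHomogeneous (k - m)) : c • splineGen n m ∈ LinearMap.range (sumSplineGen n k) :=
  ⟨Pi.single ⟨m, Nat.lt_succ_of_le (le_min hmk hmn)⟩ ⟨c, hc⟩, by
    rw [sumSplineGen, LinearMap.lsum_piSingle]; rfl⟩

/-- Downward induction on `m`: subtracting `c • splineGen n m`, with `c = f_m / splineGen n m m`,
makes `f` vanish on `0, …, m` as well. -/
theorem mem_range_sumSplineGen {m : ℕ} (hm : m ≤ n + 1) {f : Fin (n + 1) → S n}
    (hf : f ∈ splineHomPart n k) (hz : ∀ j : Fin (n + 1), (j : ℕ) < m → f j = 0) :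
    f ∈ LinearMap.range (sumSplineGen n k) := by
  induction hm using Nat.decreasingInduction generalizing f with
  | self =>
    obtain rfl : f = 0 := funext fun j => hz j j.2
    exact Submodule.zero_mem _
  | of_succ m hmn ih =>
    obtain ⟨hfs, hfk⟩ := mem_splineHomPart_iff.mp hf
    have hdvd := splineGen_apply_self_dvd hmn hfs hz
    have hgen := splineGen_isHomogeneous hmn.le ⟨m, hmn⟩
    have hz_succ_of_eq {g : Fin (n + 1) → S n} (hg : ∀ j : Fin (n + 1), (j : ℕ) < m → g j = 0)
        (hgm : g ⟨m, hmn⟩ = 0) (j : Fin (n + 1)) (hj : (j : ℕ) < m + 1) : g j = 0 := by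
      rcases Nat.lt_succ_iff_lt_or_eq.mp hj with hj | hj
      · exact hg j hj
      · rwa [show j = ⟨m, hmn⟩ from Fin.ext hj]
    by_cases hmk : m ≤ k
    · obtain ⟨c, hc, hfc⟩ := hgen.exists_eq_mul_of_dvd (hfk _) hdvd hmk
      have hrest : f - c • splineGen n m ∈ LinearMap.range (sumSplineGen n k) := by
        refine ih (Submodule.sub_mem _ hf (smul_splineGen_mem_splineHomPart hmn.le hmk hc))
          (hz_succ_of_eq (fun j hj => ?_) ?_)
        · simp [hz j hj, splineGen_apply_of_lt hj]
        · simp [hfc, mul_comm]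
      simpa using Submodule.add_mem _ hrest
        (smul_splineGen_mem_range hmk (Nat.lt_succ_iff.mp hmn) hc)
    · exact ih hf (hz_succ_of_eq hz
        (hgen.eq_zero_of_dvd_of_lt (hfk _) hdvd (not_le.mp hmk)))

theorem range_sumSplineGen : LinearMap.range (sumSplineGen n k) = splineHomPart n k := by
  refine le_antisymm ?_ fun f hf => mem_range_sumSplineGen (Nat.zero_le _) hf fun _ h =>
    absurd h (Nat.not_lt_zero _)
  rintro _ ⟨c, rfl⟩
  rw [sumSplineGen_apply]
  refine Submodule.sum_mem _ fun m _ => ?_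
  have ⟨hmk, hmn⟩ := val_le_of_fin_min_succ m
  exact smul_splineGen_mem_splineHomPart (by omega) hmk (c m).2

/-- Triangularity: in a relation, the coefficient of lowest index `m` survives at position `m`. -/
theorem sumSplineGen_injective : Function.Injective (sumSplineGen n k) := by
  refine (injective_iff_map_eq_zero _).mpr fun c hc => funext fun m => ?_
  induction m using WellFoundedLT.induction with
  | _ m ih =>
    have hm := Nat.lt_succ_of_le (val_le_of_fin_min_succ m).2
    have hcomp := congr_fun hc ⟨m, hm⟩
    rw [sumSplineGen_apply, Finset.sum_apply, Fintype.sum_eq_single m fun l hl => ?_] at hcomp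
    · exact Subtype.ext ((mul_eq_zero.mp hcomp).resolve_right (splineGen_apply_self_ne_zero hm))
    · rcases lt_or_gt_of_ne hl with hl | hl
      · simp [ih l hl]
      · simp [splineGen_apply_of_lt (show ((⟨m, hm⟩ : Fin (n + 1)) : ℕ) < l from hl)]

noncomputable def splineHomPartEquiv (n k : ℕ) :
    (∀ m : Fin (min k n + 1), homogeneousSubmodule (Fin n) ℚ (k - m)) ≃ₗ[ℚ]
      splineHomPart n k :=
  (LinearEquiv.ofInjective _ sumSplineGen_injective).trans
    (LinearEquiv.ofEq _ _ range_sumSplineGen)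

end Basis

theorem spline_hilbert_function (n : ℕ) (hn : 1 ≤ n) (k : ℕ) :
    Module.finrank ℚ (splineHomPart n k) =
      ∑ i ∈ Finset.range (min k n + 1), Nat.choose (k - i + n - 1) (n - 1) := by
  rw [← (splineHomPartEquiv n k).finrank_eq, Module.finrank_pi_fintype,
    ← Fin.sum_univ_eq_sum_range]
  refine Finset.sum_congr rfl fun m _ => ?_
  have hmk := (val_le_of_fin_min_succ m).1
  rw [finrank_homogeneousSubmodule, Fintype.card_fin,
    show k - m + n - 1 = n + (k - m) - 1 by omega]
  exact Nat.choose_symm_of_eq_add (by omega)
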